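/- Let (M,g) be a Riemannian manifold admitting a virtual immersion Ω: TM → V with skew-symmetric second fundamental form. Then ∇R = 0, i.e., M is a locally symmetric space. -/

import Mathlib

/-!
Skewness of `II` and torsion-freeness give `2 II(X,Y) = dΩ(X,Y)`. Hence condition (b) says that
`II` is normal to the image of `Ω`, and `Ω(∇_X Y)` is given by a Koszul-type formula, which makes
`∇` additive in both slots. Flatness of `D` (symmetry of second derivatives) gives the Codazzi
equation `Ω R(X,Y)Z = (∇_X II)(Y,Z) − (∇_Y II)(X,Z)`; as `∇_X II` is skew, the first Bianchi
identity turns it into `(∇_X II)(Y,Z) = −Ω R(Y,Z)X`. Differentiating `⟨II(Y,Z), ΩU⟩ = 0` then gives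
the Gauss equation `g(R(Y,Z)X, U) = ⟨II(Y,Z), II(X,U)⟩`, and differentiating the Gauss equation
once more, every pairing of a normal with a tangential vector drops out, leaving
`g((∇_X R)(Y,Z)W, U) = 0`.
-/

open VectorField
open scoped ContDiff

section Bilinear

variable {E F G H : Type*} [NormedAddCommGroup E] [NormedSpace ℝ E]
  [NormedAddCommGroup F] [NormedSpace ℝ F] [FiniteDimensional ℝ F]
  [NormedAddCommGroup G] [NormedSpace ℝ G] [FiniteDimensional ℝ G]
  [NormedAddCommGroup H] [NormedSpace ℝ H]

theorem LinearMap.fderiv_apply₂ (B : F →ₗ[ℝ] G →ₗ[ℝ] H) {f : E → F} {h : E → G} {p : E}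
    (hf : DifferentiableAt ℝ f p) (hh : DifferentiableAt ℝ h p) (v : E) :
    fderiv ℝ (fun q => B (f q) (h q)) p v
      = B (fderiv ℝ f p v) (h p) + B (f p) (fderiv ℝ h p v) := by
  change fderiv ℝ (fun q => B.toContinuousBilinearMap (f q) (h q)) p v = _
  rw [B.toContinuousBilinearMap.fderiv_of_bilinear hf hh]
  simp [add_comm]

end Bilinear

theorem injective_of_pos_pullback {M N F : Type*} [AddCommGroup M] [AddCommGroup N] [Module ℝ N]
    [FunLike F M N] [AddMonoidHomClass F M N] {T : F} (B : N →ₗ[ℝ] N →ₗ[ℝ] ℝ)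
    (hpos : ∀ v ≠ 0, 0 < B (T v) (T v)) : Function.Injective T := by
  refine (injective_iff_map_eq_zero T).2 fun v hv => ?_
  by_contra hne
  simpa [hv] using hpos v hne

namespace VectorField

variable {𝕜 E : Type*} [NontriviallyNormedField 𝕜] [NormedAddCommGroup E] [NormedSpace 𝕜 E]

theorem lieBracket_neg_right (V W : E → E) : lieBracket 𝕜 V (-W) = -lieBracket 𝕜 V W := by
  ext x
  simp [lieBracket, fderiv_neg]
  abel

theorem lieBracket_jacobi {n : WithTop ℕ∞} (hn : minSmoothness 𝕜 2 ≤ n) {U V W : E → E} {x : E}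
    (hU : ContDiffAt 𝕜 n U x) (hV : ContDiffAt 𝕜 n V x) (hW : ContDiffAt 𝕜 n W x) :
    lieBracket 𝕜 (lieBracket 𝕜 U V) W x + lieBracket 𝕜 (lieBracket 𝕜 V W) U x
      + lieBracket 𝕜 (lieBracket 𝕜 W U) V x = 0 := by
  have h := leibniz_identity_lieBracket hn hU hV hW
  rw [show lieBracket 𝕜 U W = -lieBracket 𝕜 W U from funext fun _ => lieBracket_swap,
    lieBracket_neg_right, Pi.neg_apply] at h
  rw [lieBracket_swap (V := lieBracket 𝕜 V W), lieBracket_swap (V := lieBracket 𝕜 W U), h]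
  abel

end VectorField

namespace VirtualImmersion

variable {E V : Type*} [NormedAddCommGroup E] [NormedSpace ℝ E]
  [NormedAddCommGroup V] [NormedSpace ℝ V]

def IsTorsionFree (nabla : (E → E) → (E → E) → E → E) : Prop :=
  ∀ X Y : E → E, ContDiff ℝ ∞ X → ContDiff ℝ ∞ Y → ∀ p,
    nabla X Y p - nabla Y X p = lieBracket ℝ X Y p

def PreservesContDiff (nabla : (E → E) → (E → E) → E → E) : Prop :=
  ∀ X Y : E → E, ContDiff ℝ ∞ X → ContDiff ℝ ∞ Y → ContDiff ℝ ∞ (nabla X Y)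

noncomputable def curvature (nabla : (E → E) → (E → E) → E → E) (X Y Z : E → E) (p : E) : E :=
  nabla Y (nabla X Z) p - nabla X (nabla Y Z) p + nabla (lieBracket ℝ X Y) Z p

variable {nabla : (E → E) → (E → E) → E → E} {X Y Z : E → E}

theorem nabla_eq_lieBracket_add (htf : IsTorsionFree nabla) (hX : ContDiff ℝ ∞ X)
    (hY : ContDiff ℝ ∞ Y) : nabla X Y = lieBracket ℝ X Y + nabla Y X :=
  funext fun p => by rw [Pi.add_apply, ← htf X Y hX hY p, sub_add_cancel]

theorem contDiff_curvature (hns : PreservesContDiff nabla) (hX : ContDiff ℝ ∞ X)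
    (hY : ContDiff ℝ ∞ Y) (hZ : ContDiff ℝ ∞ Z) : ContDiff ℝ ∞ (curvature nabla X Y Z) :=
  ((hns Y _ hY (hns X Z hX hZ)).sub (hns X _ hX (hns Y Z hY hZ))).add
    (hns _ Z (hX.lieBracket_vectorField hY (by simp)) hZ)

theorem curvature_cyclic_sum (htf : IsTorsionFree nabla) (hns : PreservesContDiff nabla)
    (hadd : ∀ X Y Z : E → E, ContDiff ℝ ∞ X → ContDiff ℝ ∞ Y → ContDiff ℝ ∞ Z → ∀ p,
      nabla X (Y + Z) p = nabla X Y p + nabla X Z p)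
    (hX : ContDiff ℝ ∞ X) (hY : ContDiff ℝ ∞ Y) (hZ : ContDiff ℝ ∞ Z) (p : E) :
    curvature nabla X Y Z p + curvature nabla Y Z X p + curvature nabla Z X Y p = 0 := by
  have hbr {U W : E → E} (hU : ContDiff ℝ ∞ U) (hW : ContDiff ℝ ∞ W) :
      ContDiff ℝ ∞ (lieBracket ℝ U W) := hU.lieBracket_vectorField hW (by simp)
  -- `∇_A ∇_U W − ∇_A ∇_W U = −∇_A [U,W]`, then torsion-freeness turns `∇_[U,W] A − ∇_A [U,W]`
  -- into `[[U,W],A]`, leaving the Jacobi identity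
  have hswap {A U W : E → E} (hA : ContDiff ℝ ∞ A) (hU : ContDiff ℝ ∞ U)
      (hW : ContDiff ℝ ∞ W) :
      nabla A (nabla W U) p = nabla A (lieBracket ℝ W U) p + nabla A (nabla U W) p := by
    rw [nabla_eq_lieBracket_add htf hW hU]
    exact hadd A _ _ hA (hbr hW hU) (hns U W hU hW) p
  have h1 := hswap hY hX hZ
  have h2 := hswap hZ hY hX
  have h3 := hswap hX hZ hY
  have t1 := htf _ Z (hbr hX hY) hZ p
  have t2 := htf _ X (hbr hY hZ) hX p
  have t3 := htf _ Y (hbr hZ hX) hY p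
  simp only [curvature]
  linear_combination (norm := module) -h1 - h2 - h3 + t1 + t2 + t3
    + lieBracket_jacobi (by simp; norm_cast) hX.contDiffAt hY.contDiffAt hZ.contDiffAt

noncomputable def secondFundamentalForm (Ω : E → E →L[ℝ] V) (nabla : (E → E) → (E → E) → E → E)
    (X Y : E → E) (p : E) : V :=
  fderiv ℝ (fun q => Ω q (Y q)) p (X p) - Ω p (nabla X Y p)

noncomputable def extDerivOneForm (Ω : E → E →L[ℝ] V) (X Y : E → E) (p : E) : V :=
  fderiv ℝ (fun q => Ω q (Y q)) p (X p) - fderiv ℝ (fun q => Ω q (X q)) p (Y p)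
    - Ω p (lieBracket ℝ X Y p)

/-- `(∇_X II)(Y,Z)`. -/
noncomputable def covDerivSecondFundamentalForm (Ω : E → E →L[ℝ] V)
    (nabla : (E → E) → (E → E) → E → E) (X Y Z : E → E) (p : E) : V :=
  fderiv ℝ (secondFundamentalForm Ω nabla Y Z) p (X p)
    - secondFundamentalForm Ω nabla (nabla X Y) Z p - secondFundamentalForm Ω nabla Y (nabla X Z) p

def IsSkewOnContDiff (b : (E → E) → (E → E) → E → V) : Prop :=
  ∀ X Y : E → E, ContDiff ℝ ∞ X → ContDiff ℝ ∞ Y → ∀ p, b X Y p = -b Y X p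

variable {Ω : E → E →L[ℝ] V}

theorem fderiv_apply_eq_nabla_add_secondFundamentalForm (p : E) :
    fderiv ℝ (fun q => Ω q (Y q)) p (X p)
      = Ω p (nabla X Y p) + secondFundamentalForm Ω nabla X Y p :=
  (add_sub_cancel _ _).symm

theorem contDiff_secondFundamentalForm (hΩ : ContDiff ℝ ∞ Ω) (hns : PreservesContDiff nabla)
    (hX : ContDiff ℝ ∞ X) (hY : ContDiff ℝ ∞ Y) :
    ContDiff ℝ ∞ (secondFundamentalForm Ω nabla X Y) :=
  (((hΩ.clm_apply hY).fderiv_right le_rfl).clm_apply hX).sub (hΩ.clm_apply (hns X Y hX hY))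

theorem two_smul_secondFundamentalForm (htf : IsTorsionFree nabla)
    (hskew : IsSkewOnContDiff (secondFundamentalForm Ω nabla))
    (hX : ContDiff ℝ ∞ X) (hY : ContDiff ℝ ∞ Y) (p : E) :
    (2 : ℝ) • secondFundamentalForm Ω nabla X Y p = extDerivOneForm Ω X Y p := by
  have h := hskew X Y hX hY p
  have hΩ := congrArg (Ω p) (htf X Y hX hY p)
  simp only [secondFundamentalForm, map_sub] at h hΩ ⊢
  rw [extDerivOneForm, ← hΩ]
  linear_combination (norm := module) h

theorem secondFundamentalForm_orthogonal (B : V →ₗ[ℝ] V →ₗ[ℝ] ℝ) (htf : IsTorsionFree nabla)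
    (hskew : IsSkewOnContDiff (secondFundamentalForm Ω nabla))
    (hb : ∀ X Y : E → E, ContDiff ℝ ∞ X → ContDiff ℝ ∞ Y → ∀ p z,
      B (extDerivOneForm Ω X Y p) (Ω p z) = 0)
    (hX : ContDiff ℝ ∞ X) (hY : ContDiff ℝ ∞ Y) (p z : E) :
    B (secondFundamentalForm Ω nabla X Y p) (Ω p z) = 0 := by
  have h := hb X Y hX hY p z
  rw [← two_smul_secondFundamentalForm htf hskew hX hY, map_smul, LinearMap.smul_apply,
    smul_eq_mul] at h
  linarith

theorem two_smul_Ω_nabla (htf : IsTorsionFree nabla)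
    (hskew : IsSkewOnContDiff (secondFundamentalForm Ω nabla))
    (hX : ContDiff ℝ ∞ X) (hY : ContDiff ℝ ∞ Y) (p : E) :
    (2 : ℝ) • Ω p (nabla X Y p) = fderiv ℝ (fun q => Ω q (Y q)) p (X p)
      + fderiv ℝ (fun q => Ω q (X q)) p (Y p) + Ω p (lieBracket ℝ X Y p) := by
  have h := two_smul_secondFundamentalForm htf hskew hX hY p
  rw [secondFundamentalForm, extDerivOneForm] at h
  linear_combination (norm := module) -h

theorem nabla_add_right (hΩ : ContDiff ℝ ∞ Ω) (htf : IsTorsionFree nabla)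
    (hskew : IsSkewOnContDiff (secondFundamentalForm Ω nabla))
    (hinj : ∀ p, Function.Injective (Ω p))
    (hX : ContDiff ℝ ∞ X) (hY : ContDiff ℝ ∞ Y) (hZ : ContDiff ℝ ∞ Z) (p : E) :
    nabla X (Y + Z) p = nabla X Y p + nabla X Z p := by
  have hdiff {U : E → E} (hU : ContDiff ℝ ∞ U) : DifferentiableAt ℝ (fun q => Ω q (U q)) p :=
    (hΩ.clm_apply hU).differentiable (by simp) p
  have hΩadd : (fun q => Ω q ((Y + Z) q)) = (fun q => Ω q (Y q)) + fun q => Ω q (Z q) :=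
    funext fun q => map_add (Ω q) (Y q) (Z q)
  refine hinj p (smul_right_injective V (two_ne_zero (α := ℝ)) ?_)
  simp only [map_add, smul_add]
  rw [two_smul_Ω_nabla (Y := Y + Z) htf hskew hX (hY.add hZ), two_smul_Ω_nabla htf hskew hX hY,
    two_smul_Ω_nabla htf hskew hX hZ, hΩadd, fderiv_add (hdiff hY) (hdiff hZ),
    lieBracket_add_right (hY.differentiable (by simp) p) (hZ.differentiable (by simp) p)]
  simp only [add_apply, Pi.add_apply, map_add]
  abel

theorem nabla_add_left (hΩ : ContDiff ℝ ∞ Ω) (htf : IsTorsionFree nabla)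
    (hskew : IsSkewOnContDiff (secondFundamentalForm Ω nabla))
    (hinj : ∀ p, Function.Injective (Ω p))
    (hX : ContDiff ℝ ∞ X) (hY : ContDiff ℝ ∞ Y) (hZ : ContDiff ℝ ∞ Z) (p : E) :
    nabla (X + Y) Z p = nabla X Z p + nabla Y Z p := by
  rw [nabla_eq_lieBracket_add (X := X + Y) htf (hX.add hY) hZ, nabla_eq_lieBracket_add htf hX hZ,
    nabla_eq_lieBracket_add htf hY hZ, Pi.add_apply, nabla_add_right hΩ htf hskew hinj hZ hX hY,
    lieBracket_add_left (hX.differentiable (by simp) p) (hY.differentiable (by simp) p)]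
  simp only [Pi.add_apply]
  abel

theorem secondFundamentalForm_add_left (hΩ : ContDiff ℝ ∞ Ω) (htf : IsTorsionFree nabla)
    (hskew : IsSkewOnContDiff (secondFundamentalForm Ω nabla))
    (hinj : ∀ p, Function.Injective (Ω p))
    (hX : ContDiff ℝ ∞ X) (hY : ContDiff ℝ ∞ Y) (hZ : ContDiff ℝ ∞ Z) (p : E) :
    secondFundamentalForm Ω nabla (X + Y) Z p
      = secondFundamentalForm Ω nabla X Z p + secondFundamentalForm Ω nabla Y Z p := by
  simp only [secondFundamentalForm, Pi.add_apply, map_add,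
    nabla_add_left hΩ htf hskew hinj hX hY hZ p]
  abel

theorem covDerivSecondFundamentalForm_swap (hns : PreservesContDiff nabla)
    (hskew : IsSkewOnContDiff (secondFundamentalForm Ω nabla))
    (hX : ContDiff ℝ ∞ X) (hY : ContDiff ℝ ∞ Y) (hZ : ContDiff ℝ ∞ Z) (p : E) :
    covDerivSecondFundamentalForm Ω nabla X Y Z p
      = -covDerivSecondFundamentalForm Ω nabla X Z Y p := by
  have h : secondFundamentalForm Ω nabla Y Z = fun q => -secondFundamentalForm Ω nabla Z Y q :=
    funext (hskew Y Z hY hZ)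
  simp only [covDerivSecondFundamentalForm]
  rw [h, fderiv_fun_neg, neg_apply, hskew _ Z (hns X Y hX hY) hZ, hskew Y _ hY (hns X Z hX hZ)]
  abel

theorem codazzi_equation (hΩ : ContDiff ℝ ∞ Ω) (hns : PreservesContDiff nabla)
    (htf : IsTorsionFree nabla) (hskew : IsSkewOnContDiff (secondFundamentalForm Ω nabla))
    (hinj : ∀ p, Function.Injective (Ω p))
    (hX : ContDiff ℝ ∞ X) (hY : ContDiff ℝ ∞ Y) (hZ : ContDiff ℝ ∞ Z) (p : E) :
    Ω p (curvature nabla X Y Z p)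
      = covDerivSecondFundamentalForm Ω nabla X Y Z p
        - covDerivSecondFundamentalForm Ω nabla Y X Z p := by
  have hsecond {U W : E → E} (hU : ContDiff ℝ ∞ U) (hW : ContDiff ℝ ∞ W) :
      fderiv ℝ (fun q => fderiv ℝ (fun r => Ω r (Z r)) q (W q)) p (U p)
        = Ω p (nabla U (nabla W Z) p) + secondFundamentalForm Ω nabla U (nabla W Z) p
          + fderiv ℝ (secondFundamentalForm Ω nabla W Z) p (U p) := by
    have h : (fun q => fderiv ℝ (fun r => Ω r (Z r)) q (W q))
        = fun q => Ω q (nabla W Z q) + secondFundamentalForm Ω nabla W Z q :=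
      funext fderiv_apply_eq_nabla_add_secondFundamentalForm
    rw [h, fderiv_fun_add ((hΩ.clm_apply (hns W Z hW hZ)).differentiable (by simp) p)
      ((contDiff_secondFundamentalForm hΩ hns hW hZ).differentiable (by simp) p), add_apply,
      fderiv_apply_eq_nabla_add_secondFundamentalForm]
  -- flatness of `D`: second derivatives of `ΩZ` commute
  have hflat := fderiv_apply_lieBracket (hΩ.clm_apply hZ).contDiffAt (by simp; norm_cast)
    (hY.differentiable (by simp) p) (hX.differentiable (by simp) p)
  rw [fderiv_apply_eq_nabla_add_secondFundamentalForm, hsecond hX hY, hsecond hY hX] at hflat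
  have hbracket := secondFundamentalForm_add_left (Z := Z) hΩ htf hskew hinj
    (hX.lieBracket_vectorField hY (by simp)) (hns Y X hY hX) hZ p
  rw [← nabla_eq_lieBracket_add htf hX hY] at hbracket
  simp only [curvature, covDerivSecondFundamentalForm, map_add, map_sub]
  linear_combination (norm := module) hflat + hbracket

theorem covDerivSecondFundamentalForm_eq_neg_Ω_curvature (hΩ : ContDiff ℝ ∞ Ω)
    (hns : PreservesContDiff nabla) (htf : IsTorsionFree nabla)
    (hskew : IsSkewOnContDiff (secondFundamentalForm Ω nabla))
    (hinj : ∀ p, Function.Injective (Ω p))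
    (hX : ContDiff ℝ ∞ X) (hY : ContDiff ℝ ∞ Y) (hZ : ContDiff ℝ ∞ Z) (p : E) :
    covDerivSecondFundamentalForm Ω nabla X Y Z p = -Ω p (curvature nabla Y Z X p) := by
  have hbianchi := congrArg (Ω p) (curvature_cyclic_sum htf hns
    (fun X Y Z hX hY hZ => nabla_add_right hΩ htf hskew hinj hX hY hZ) hX hY hZ p)
  rw [map_add, map_add, map_zero, codazzi_equation hΩ hns htf hskew hinj hX hY hZ,
    codazzi_equation hΩ hns htf hskew hinj hY hZ hX,
    codazzi_equation hΩ hns htf hskew hinj hZ hX hY,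
    covDerivSecondFundamentalForm_swap hns hskew hY hX hZ,
    covDerivSecondFundamentalForm_swap hns hskew hZ hY hX,
    covDerivSecondFundamentalForm_swap hns hskew hX hZ hY] at hbianchi
  rw [codazzi_equation hΩ hns htf hskew hinj hY hZ hX,
    covDerivSecondFundamentalForm_swap hns hskew hZ hY hX]
  linear_combination (norm := module) (1 / 2 : ℝ) • hbianchi

theorem fderiv_secondFundamentalForm_apply (hΩ : ContDiff ℝ ∞ Ω)
    (hns : PreservesContDiff nabla) (htf : IsTorsionFree nabla)
    (hskew : IsSkewOnContDiff (secondFundamentalForm Ω nabla))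
    (hinj : ∀ p, Function.Injective (Ω p))
    (hX : ContDiff ℝ ∞ X) (hY : ContDiff ℝ ∞ Y) (hZ : ContDiff ℝ ∞ Z) (p : E) :
    fderiv ℝ (secondFundamentalForm Ω nabla Y Z) p (X p)
      = -Ω p (curvature nabla Y Z X p) + secondFundamentalForm Ω nabla (nabla X Y) Z p
        + secondFundamentalForm Ω nabla Y (nabla X Z) p := by
  rw [← covDerivSecondFundamentalForm_eq_neg_Ω_curvature hΩ hns htf hskew hinj hX hY hZ,
    covDerivSecondFundamentalForm]
  abel

variable [FiniteDimensional ℝ V]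

theorem gauss_equation (B : V →ₗ[ℝ] V →ₗ[ℝ] ℝ) (g : E → E →ₗ[ℝ] E →ₗ[ℝ] ℝ)
    (ha : ∀ p (v w : E), B (Ω p v) (Ω p w) = g p v w)
    (hb : ∀ X Y : E → E, ContDiff ℝ ∞ X → ContDiff ℝ ∞ Y → ∀ p z,
      B (extDerivOneForm Ω X Y p) (Ω p z) = 0)
    (hΩ : ContDiff ℝ ∞ Ω) (hns : PreservesContDiff nabla) (htf : IsTorsionFree nabla)
    (hskew : IsSkewOnContDiff (secondFundamentalForm Ω nabla))
    (hinj : ∀ p, Function.Injective (Ω p)) {U : E → E}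
    (hX : ContDiff ℝ ∞ X) (hY : ContDiff ℝ ∞ Y) (hZ : ContDiff ℝ ∞ Z) (hU : ContDiff ℝ ∞ U)
    (p : E) :
    g p (curvature nabla Y Z X p) (U p)
      = B (secondFundamentalForm Ω nabla Y Z p) (secondFundamentalForm Ω nabla X U p) := by
  have horth {A C : E → E} (hA : ContDiff ℝ ∞ A) (hC : ContDiff ℝ ∞ C) (q z : E) :=
    secondFundamentalForm_orthogonal B htf hskew hb hA hC q z
  -- differentiate `B (II(Y,Z)) (ΩU) = 0` along `X`
  have hzero : fderiv ℝ (fun q => B (secondFundamentalForm Ω nabla Y Z q) (Ω q (U q))) p (X p)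
      = 0 := by
    simp [horth hY hZ]
  rw [B.fderiv_apply₂ ((contDiff_secondFundamentalForm hΩ hns hY hZ).differentiable (by simp) p)
      ((hΩ.clm_apply hU).differentiable (by simp) p),
    fderiv_secondFundamentalForm_apply hΩ hns htf hskew hinj hX hY hZ,
    fderiv_apply_eq_nabla_add_secondFundamentalForm] at hzero
  simp only [map_add, map_neg, LinearMap.add_apply, LinearMap.neg_apply, ha,
    horth (hns X Y hX hY) hZ, horth hY (hns X Z hX hZ), horth hY hZ] at hzero
  linear_combination -hzero

theorem metric_covDeriv_curvature_eq_zero (B : V →ₗ[ℝ] V →ₗ[ℝ] ℝ)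
    (hBsymm : ∀ u v : V, B u v = B v u)
    (g : E → E →ₗ[ℝ] E →ₗ[ℝ] ℝ) (ha : ∀ p (v w : E), B (Ω p v) (Ω p w) = g p v w)
    (hb : ∀ X Y : E → E, ContDiff ℝ ∞ X → ContDiff ℝ ∞ Y → ∀ p z,
      B (extDerivOneForm Ω X Y p) (Ω p z) = 0)
    (hmetric : ∀ X Y Z : E → E, ContDiff ℝ ∞ X → ContDiff ℝ ∞ Y → ContDiff ℝ ∞ Z → ∀ p,
      fderiv ℝ (fun q => g q (Y q) (Z q)) p (X p)
        = g p (nabla X Y p) (Z p) + g p (Y p) (nabla X Z p))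
    (hΩ : ContDiff ℝ ∞ Ω) (hns : PreservesContDiff nabla) (htf : IsTorsionFree nabla)
    (hskew : IsSkewOnContDiff (secondFundamentalForm Ω nabla))
    (hinj : ∀ p, Function.Injective (Ω p)) {W U : E → E}
    (hX : ContDiff ℝ ∞ X) (hY : ContDiff ℝ ∞ Y) (hZ : ContDiff ℝ ∞ Z) (hW : ContDiff ℝ ∞ W)
    (hU : ContDiff ℝ ∞ U) (p : E) :
    g p (nabla X (curvature nabla Y Z W) p - curvature nabla (nabla X Y) Z W p
      - curvature nabla Y (nabla X Z) W p - curvature nabla Y Z (nabla X W) p) (U p) = 0 := by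
  have horth {A C : E → E} (hA : ContDiff ℝ ∞ A) (hC : ContDiff ℝ ∞ C) (q z : E) :=
    secondFundamentalForm_orthogonal B htf hskew hb hA hC q z
  have hgauss {A C D : E → E} (hA : ContDiff ℝ ∞ A) (hC : ContDiff ℝ ∞ C) (hD : ContDiff ℝ ∞ D)
      {F : E → E} (hF : ContDiff ℝ ∞ F) (q : E) :=
    gauss_equation B g ha hb hΩ hns htf hskew hinj hA hC hD hF q
  have hsff {A C : E → E} (hA : ContDiff ℝ ∞ A) (hC : ContDiff ℝ ∞ C) :=
    (contDiff_secondFundamentalForm hΩ hns hA hC).differentiable (by simp) p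
  -- differentiate the Gauss equation `g (R(Y,Z)W) U = B (II(Y,Z)) (II(W,U))` along `X`
  have h := hmetric X _ U hX (contDiff_curvature hns hY hZ hW) hU p
  rw [show (fun q => g q (curvature nabla Y Z W q) (U q)) = fun q =>
      B (secondFundamentalForm Ω nabla Y Z q) (secondFundamentalForm Ω nabla W U q) from
      funext (hgauss hW hY hZ hU),
    B.fderiv_apply₂ (hsff hY hZ) (hsff hW hU),
    fderiv_secondFundamentalForm_apply hΩ hns htf hskew hinj hX hY hZ,
    fderiv_secondFundamentalForm_apply hΩ hns htf hskew hinj hX hW hU] at h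
  simp only [map_add, map_neg, LinearMap.add_apply, LinearMap.neg_apply, horth hY hZ,
    hBsymm (Ω p _), horth hW hU, ← hgauss hW (hns X Y hX hY) hZ hU,
    ← hgauss hW hY (hns X Z hX hZ) hU, ← hgauss (hns X W hX hW) hY hZ hU,
    ← hgauss hW hY hZ (hns X U hX hU)] at h
  simp only [map_sub, LinearMap.sub_apply]
  linear_combination -h

end VirtualImmersion

open VirtualImmersion

theorem stmt_17_general {E V : Type*}
    [NormedAddCommGroup E] [NormedSpace ℝ E]
    [NormedAddCommGroup V] [NormedSpace ℝ V] [FiniteDimensional ℝ V]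
    -- the nondegenerate symmetric bilinear form on V
    (B : V →ₗ[ℝ] V →ₗ[ℝ] ℝ) (hBsymm : ∀ u v : V, B u v = B v u)
    -- the Riemannian metric g
    (g : E → E →ₗ[ℝ] E →ₗ[ℝ] ℝ)
    (hgpos : ∀ p (v : E), v ≠ 0 → 0 < g p v v)
    -- the V-valued one-form Ω, satisfying condition (a)
    (Ω : E → (E →L[ℝ] V)) (hΩ : ContDiff ℝ (⊤ : ℕ∞) Ω)
    (ha : ∀ p (v w : E), B (Ω p v) (Ω p w) = g p v w)
    -- condition (b): ⟨dΩ(X,Y), Ω(Z)⟩ = 0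
    (hb : ∀ X Y : E → E, ContDiff ℝ (⊤ : ℕ∞) X → ContDiff ℝ (⊤ : ℕ∞) Y → ∀ p (z : E),
        B (fderiv ℝ (fun q => Ω q (Y q)) p (X p)
            - fderiv ℝ (fun q => Ω q (X q)) p (Y p)
            - Ω p (fderiv ℝ Y p (X p) - fderiv ℝ X p (Y p))) (Ω p z) = 0)
    -- the Levi-Civita connection ∇ of g: torsion-free and metric
    (nabla : (E → E) → (E → E) → (E → E))
    (hns : ∀ X Y : E → E, ContDiff ℝ (⊤ : ℕ∞) X → ContDiff ℝ (⊤ : ℕ∞) Y →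
      ContDiff ℝ (⊤ : ℕ∞) (nabla X Y))
    (htf : ∀ X Y : E → E, ContDiff ℝ (⊤ : ℕ∞) X → ContDiff ℝ (⊤ : ℕ∞) Y →
      ∀ p, nabla X Y p - nabla Y X p = fderiv ℝ Y p (X p) - fderiv ℝ X p (Y p))
    (hmetric : ∀ X Y Z : E → E, ContDiff ℝ (⊤ : ℕ∞) X → ContDiff ℝ (⊤ : ℕ∞) Y →
      ContDiff ℝ (⊤ : ℕ∞) Z → ∀ p,
      fderiv ℝ (fun q => g q (Y q) (Z q)) p (X p)
        = g p (nabla X Y p) (Z p) + g p (Y p) (nabla X Z p))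
    -- the second fundamental form II(X,Y) = D_X(Ω(Y)) − Ω(∇_X Y)
    (II : (E → E) → (E → E) → E → V)
    (hII : ∀ (X Y : E → E) p,
      II X Y p = fderiv ℝ (fun q => Ω q (Y q)) p (X p) - Ω p (nabla X Y p))
    -- II is skew-symmetric
    (hskew : ∀ X Y : E → E, ContDiff ℝ (⊤ : ℕ∞) X → ContDiff ℝ (⊤ : ℕ∞) Y →
      ∀ p, II X Y p = - II Y X p)
    -- the curvature tensor R(X,Y)Z = ∇_Y ∇_X Z − ∇_X ∇_Y Z + ∇_{[X,Y]} Z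
    (Rt : (E → E) → (E → E) → (E → E) → E → E)
    (hRt : ∀ (X Y Z : E → E) p,
      Rt X Y Z p = nabla Y (nabla X Z) p - nabla X (nabla Y Z) p
        + nabla (fun q => fderiv ℝ Y q (X q) - fderiv ℝ X q (Y q)) Z p) :
    -- ∇R = 0: (∇_X R)(Y,Z)W = ∇_X(R(Y,Z)W) − R(∇_X Y,Z)W − R(Y,∇_X Z)W − R(Y,Z)(∇_X W) = 0
    ∀ X Y Z W : E → E, ContDiff ℝ (⊤ : ℕ∞) X → ContDiff ℝ (⊤ : ℕ∞) Y →
      ContDiff ℝ (⊤ : ℕ∞) Z → ContDiff ℝ (⊤ : ℕ∞) W → ∀ p,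
      nabla X (fun q => Rt Y Z W q) p - Rt (nabla X Y) Z W p
        - Rt Y (nabla X Z) W p - Rt Y Z (nabla X W) p = 0 := by
  obtain rfl : II = secondFundamentalForm Ω nabla :=
    funext fun X => funext fun Y => funext (hII X Y)
  obtain rfl : Rt = curvature nabla :=
    funext fun X => funext fun Y => funext fun Z => funext (hRt X Y Z)
  have hinj p : Function.Injective (Ω p) :=
    injective_of_pos_pullback B fun v hv => ha p v v ▸ hgpos p v hv
  intro X Y Z W hX hY hZ hW p
  by_contra hne
  exact (hgpos p _ hne).ne' <|
    metric_covDeriv_curvature_eq_zero B hBsymm g ha hb hmetric hΩ hns htf hskew hinj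
      hX hY hZ hW contDiff_const p

/-- (In the chart model where the manifold is a finite-dimensional
real vector space `E` and the flat connection `D` is `fderiv`.) If a Riemannian
manifold admits a virtual immersion `Ω` with skew-symmetric second fundamental
form, then `∇R = 0`, i.e. the manifold is locally symmetric. -/
theorem stmt_17 {E V : Type*}
    [NormedAddCommGroup E] [NormedSpace ℝ E] [FiniteDimensional ℝ E]
    [NormedAddCommGroup V] [NormedSpace ℝ V] [FiniteDimensional ℝ V]
    -- the nondegenerate symmetric bilinear form on V
    (B : V →ₗ[ℝ] V →ₗ[ℝ] ℝ) (hBsymm : ∀ u v : V, B u v = B v u)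
    (hBnd : ∀ u : V, (∀ v : V, B u v = 0) → u = 0)
    -- the Riemannian metric g
    (g : E → E →ₗ[ℝ] E →ₗ[ℝ] ℝ) (hgsymm : ∀ p (v w : E), g p v w = g p w v)
    (hgpos : ∀ p (v : E), v ≠ 0 → 0 < g p v v)
    -- the V-valued one-form Ω, satisfying condition (a)
    (Ω : E → (E →L[ℝ] V)) (hΩ : ContDiff ℝ (⊤ : ℕ∞) Ω)
    (ha : ∀ p (v w : E), B (Ω p v) (Ω p w) = g p v w)
    -- condition (b): ⟨dΩ(X,Y), Ω(Z)⟩ = 0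
    (hb : ∀ X Y : E → E, ContDiff ℝ (⊤ : ℕ∞) X → ContDiff ℝ (⊤ : ℕ∞) Y → ∀ p (z : E),
        B (fderiv ℝ (fun q => Ω q (Y q)) p (X p)
            - fderiv ℝ (fun q => Ω q (X q)) p (Y p)
            - Ω p (fderiv ℝ Y p (X p) - fderiv ℝ X p (Y p))) (Ω p z) = 0)
    -- the Levi-Civita connection ∇ of g: torsion-free and metric
    (nabla : (E → E) → (E → E) → (E → E))
    (hns : ∀ X Y : E → E, ContDiff ℝ (⊤ : ℕ∞) X → ContDiff ℝ (⊤ : ℕ∞) Y →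
      ContDiff ℝ (⊤ : ℕ∞) (nabla X Y))
    (htf : ∀ X Y : E → E, ContDiff ℝ (⊤ : ℕ∞) X → ContDiff ℝ (⊤ : ℕ∞) Y →
      ∀ p, nabla X Y p - nabla Y X p = fderiv ℝ Y p (X p) - fderiv ℝ X p (Y p))
    (hmetric : ∀ X Y Z : E → E, ContDiff ℝ (⊤ : ℕ∞) X → ContDiff ℝ (⊤ : ℕ∞) Y →
      ContDiff ℝ (⊤ : ℕ∞) Z → ∀ p,
      fderiv ℝ (fun q => g q (Y q) (Z q)) p (X p)
        = g p (nabla X Y p) (Z p) + g p (Y p) (nabla X Z p))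
    -- the second fundamental form II(X,Y) = D_X(Ω(Y)) − Ω(∇_X Y)
    (II : (E → E) → (E → E) → E → V)
    (hII : ∀ (X Y : E → E) p,
      II X Y p = fderiv ℝ (fun q => Ω q (Y q)) p (X p) - Ω p (nabla X Y p))
    -- II is skew-symmetric
    (hskew : ∀ X Y : E → E, ContDiff ℝ (⊤ : ℕ∞) X → ContDiff ℝ (⊤ : ℕ∞) Y →
      ∀ p, II X Y p = - II Y X p)
    -- the curvature tensor R(X,Y)Z = ∇_Y ∇_X Z − ∇_X ∇_Y Z + ∇_{[X,Y]} Z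
    (Rt : (E → E) → (E → E) → (E → E) → E → E)
    (hRt : ∀ (X Y Z : E → E) p,
      Rt X Y Z p = nabla Y (nabla X Z) p - nabla X (nabla Y Z) p
        + nabla (fun q => fderiv ℝ Y q (X q) - fderiv ℝ X q (Y q)) Z p) :
    -- ∇R = 0: (∇_X R)(Y,Z)W = ∇_X(R(Y,Z)W) − R(∇_X Y,Z)W − R(Y,∇_X Z)W − R(Y,Z)(∇_X W) = 0
    ∀ X Y Z W : E → E, ContDiff ℝ (⊤ : ℕ∞) X → ContDiff ℝ (⊤ : ℕ∞) Y →
      ContDiff ℝ (⊤ : ℕ∞) Z → ContDiff ℝ (⊤ : ℕ∞) W → ∀ p,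
      nabla X (fun q => Rt Y Z W q) p - Rt (nabla X Y) Z W p
        - Rt Y (nabla X Z) W p - Rt Y Z (nabla X W) p = 0 :=
  stmt_17_general B hBsymm g hgpos Ω hΩ ha hb nabla hns htf hmetric II hII hskew Rt hRt
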